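/- Let E be a nonempty closed convex subset of a Banach space X and T : E → E a contractive-like operator with fixed point p. Let {α_n}, {β_n} ⊂ [0,1) with ∑ α_n = ∞. Define Thianwan's two-step iteration: x_0 ∈ E, y_n = (1 − β_n) x_n + β_n T x_n, x_{n+1} = (1 − α_n) y_n + α_n T y_n. Then x_n converges to p. -/

import Mathlib

/-!
Since `T p = p` and `φ 0 = 0`, the contractive-like condition taken at the pair `(p, z)` reads
`‖T z - p‖ ≤ δ ‖z - p‖`. A convex combination `(1 - t) z + t T z` is therefore closer to `p`
by the factor `1 - (1 - δ) t`, so each Thianwan step shrinks `‖x n - p‖` by at least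
`1 - (1 - δ) α n ≤ exp (-(1 - δ) α n)`, and `∑ α n = ∞` drives the product of these factors to `0`.
-/

open Filter Topology

theorem norm_sub_le_of_contractiveLike {X : Type*} [SeminormedAddCommGroup X]
    {E : Set X} {T : X → X} {δ : ℝ} {φ : ℝ → ℝ} (hφ0 : φ 0 = 0)
    (hcontr : ∀ x ∈ E, ∀ y ∈ E, ‖T x - T y‖ ≤ δ * ‖x - y‖ + φ ‖x - T x‖)
    {p : X} (hp : p ∈ E) (hTp : T p = p) {z : X} (hz : z ∈ E) :
    ‖T z - p‖ ≤ δ * ‖z - p‖ := by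
  simpa [hTp, hφ0, norm_sub_rev] using hcontr p hp z hz

theorem norm_one_sub_smul_add_smul_sub_le {X : Type*} [SeminormedAddCommGroup X]
    [NormedSpace ℝ X] {z w p : X} {δ t : ℝ} (ht0 : 0 ≤ t) (ht1 : t ≤ 1)
    (hw : ‖w - p‖ ≤ δ * ‖z - p‖) :
    ‖(1 - t) • z + t • w - p‖ ≤ (1 - (1 - δ) * t) * ‖z - p‖ := by
  have hsplit : (1 - t) • z + t • w - p = (1 - t) • (z - p) + t • (w - p) := by module
  calc ‖(1 - t) • z + t • w - p‖ ≤ (1 - t) * ‖z - p‖ + t * ‖w - p‖ := by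
        rw [hsplit]
        refine (norm_add_le _ _).trans_eq ?_
        rw [norm_smul_of_nonneg (sub_nonneg.2 ht1), norm_smul_of_nonneg ht0]
    _ ≤ (1 - t) * ‖z - p‖ + t * (δ * ‖z - p‖) := by gcongr
    _ = (1 - (1 - δ) * t) * ‖z - p‖ := by ring

theorem Convex.one_sub_smul_add_smul_map_mem {X : Type*} [AddCommGroup X] [Module ℝ X]
    {E : Set X} (hE : Convex ℝ E) {T : X → X} (hT : Set.MapsTo T E E) {z : X} (hz : z ∈ E)
    {t : ℝ} (ht0 : 0 ≤ t) (ht1 : t ≤ 1) : (1 - t) • z + t • T z ∈ E :=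
  hE hz (hT hz) (sub_nonneg.2 ht1) ht0 (sub_add_cancel 1 t)

theorem le_mul_exp_neg_sum_of_le_one_sub_mul {a c : ℕ → ℝ} (ha : ∀ n, 0 ≤ a n)
    (hstep : ∀ n, a (n + 1) ≤ (1 - c n) * a n) (n : ℕ) :
    a n ≤ a 0 * Real.exp (-∑ k ∈ Finset.range n, c k) := by
  induction n with
  | zero => simp
  | succ n ih =>
    calc a (n + 1) ≤ (1 - c n) * a n := hstep n
      _ ≤ Real.exp (-c n) * (a 0 * Real.exp (-∑ k ∈ Finset.range n, c k)) := by
        gcongr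
        · exact ha n
        · linarith [Real.add_one_le_exp (-c n)]
      _ = a 0 * Real.exp (-∑ k ∈ Finset.range (n + 1), c k) := by
        rw [Finset.sum_range_succ, neg_add, Real.exp_add]
        ring

theorem tendsto_zero_of_le_one_sub_mul {a c : ℕ → ℝ} (ha : ∀ n, 0 ≤ a n)
    (hstep : ∀ n, a (n + 1) ≤ (1 - c n) * a n)
    (hc : Tendsto (fun N => ∑ n ∈ Finset.range N, c n) atTop atTop) :
    Tendsto a atTop (𝓝 0) := by
  have hexp : Tendsto (fun N => a 0 * Real.exp (-∑ n ∈ Finset.range N, c n)) atTop (𝓝 0) := by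
    simpa using (Real.tendsto_exp_atBot.comp (tendsto_neg_atTop_atBot.comp hc)).const_mul (a 0)
  exact squeeze_zero ha (le_mul_exp_neg_sum_of_le_one_sub_mul ha hstep) hexp

theorem thianwan_iteration_converges_general
    {X : Type*} [NormedAddCommGroup X] [NormedSpace ℝ X]
    (E : Set X) (hEco : Convex ℝ E)
    (T : X → X) (hT : Set.MapsTo T E E)
    (δ : ℝ) (hδ : δ ∈ Set.Ico (0 : ℝ) 1)
    (φ : ℝ → ℝ) (hφ0 : φ 0 = 0)
    (hcontr : ∀ x ∈ E, ∀ y ∈ E, ‖T x - T y‖ ≤ δ * ‖x - y‖ + φ ‖x - T x‖)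
    (p : X) (hp : p ∈ E) (hTp : T p = p)
    (α β : ℕ → ℝ)
    (hα : ∀ n, α n ∈ Set.Ico (0 : ℝ) 1)
    (hβ : ∀ n, β n ∈ Set.Ico (0 : ℝ) 1)
    (hαdiv : Tendsto (fun N => ∑ n ∈ Finset.range N, α n) atTop atTop)
    (x y : ℕ → X) (hx0 : x 0 ∈ E)
    (hy : ∀ n, y n = (1 - β n) • x n + β n • T (x n))
    (hx : ∀ n, x (n + 1) = (1 - α n) • y n + α n • T (y n)) :
    Tendsto x atTop (𝓝 p) := by
  obtain ⟨hδ0, hδ1⟩ := hδ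
  have hyE : ∀ n, x n ∈ E → y n ∈ E := fun n hxn => by
    rw [hy n]; exact hEco.one_sub_smul_add_smul_map_mem hT hxn (hβ n).1 (hβ n).2.le
  have hxE : ∀ n, x n ∈ E := fun n => by
    induction n with
    | zero => exact hx0
    | succ n ih =>
      rw [hx n]; exact hEco.one_sub_smul_add_smul_map_mem hT (hyE n ih) (hα n).1 (hα n).2.le
  have hTE : ∀ z ∈ E, ‖T z - p‖ ≤ δ * ‖z - p‖ := fun _ hz =>
    norm_sub_le_of_contractiveLike hφ0 hcontr hp hTp hz
  have hstep : ∀ n, ‖x (n + 1) - p‖ ≤ (1 - (1 - δ) * α n) * ‖x n - p‖ := fun n => by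
    have hyn : ‖y n - p‖ ≤ ‖x n - p‖ := by
      rw [hy n]
      refine (norm_one_sub_smul_add_smul_sub_le (hβ n).1 (hβ n).2.le (hTE _ (hxE n))).trans ?_
      nlinarith [mul_nonneg (mul_nonneg (sub_nonneg.2 hδ1.le) (hβ n).1) (norm_nonneg (x n - p))]
    rw [hx n]
    refine (norm_one_sub_smul_add_smul_sub_le (hα n).1 (hα n).2.le
      (hTE _ (hyE n (hxE n)))).trans ?_
    exact mul_le_mul_of_nonneg_left hyn (by nlinarith [(hα n).1, (hα n).2])
  have hdiv : Tendsto (fun N => ∑ n ∈ Finset.range N, (1 - δ) * α n) atTop atTop := by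
    simpa only [← Finset.mul_sum] using hαdiv.const_mul_atTop (sub_pos.2 hδ1)
  exact tendsto_iff_norm_sub_tendsto_zero.2
    (tendsto_zero_of_le_one_sub_mul (fun n => norm_nonneg _) hstep hdiv)

theorem thianwan_iteration_converges
    {X : Type*} [NormedAddCommGroup X] [NormedSpace ℝ X] [CompleteSpace X]
    (E : Set X) (hEne : E.Nonempty) (hEcl : IsClosed E) (hEco : Convex ℝ E)
    (T : X → X) (hT : Set.MapsTo T E E)
    (δ : ℝ) (hδ : δ ∈ Set.Ico (0 : ℝ) 1)
    (φ : ℝ → ℝ) (hφmono : StrictMonoOn φ (Set.Ici 0))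
    (hφcont : ContinuousOn φ (Set.Ici 0)) (hφ0 : φ 0 = 0)
    (hcontr : ∀ x ∈ E, ∀ y ∈ E, ‖T x - T y‖ ≤ δ * ‖x - y‖ + φ ‖x - T x‖)
    (p : X) (hp : p ∈ E) (hTp : T p = p)
    (α β : ℕ → ℝ)
    (hα : ∀ n, α n ∈ Set.Ico (0 : ℝ) 1)
    (hβ : ∀ n, β n ∈ Set.Ico (0 : ℝ) 1)
    (hαdiv : Tendsto (fun N => ∑ n ∈ Finset.range N, α n) atTop atTop)
    (x y : ℕ → X) (hx0 : x 0 ∈ E)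
    (hy : ∀ n, y n = (1 - β n) • x n + β n • T (x n))
    (hx : ∀ n, x (n + 1) = (1 - α n) • y n + α n • T (y n)) :
    Tendsto x atTop (𝓝 p) :=
  thianwan_iteration_converges_general E hEco T hT δ hδ φ hφ0 hcontr p hp hTp α β hα hβ hαdiv x y
    hx0 hy hx
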